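/- Let F ∈ B(A) have closed image. Then F is lower semi-Fredholm with respect to the ideal F if and only if the orthogonal projection onto (Im F)^⊥ belongs to F. -/

import Mathlib

variable {A : Type*}

/-- An orthogonal projection in a C*-algebra. -/
def IsProjectionElem [CStarAlgebra A] (p : A) : Prop := IsSelfAdjoint p ∧ p * p = p

/-- Murray–von Neumann equivalence of projections: `p ∼ q`. -/
def MvNEquiv [CStarAlgebra A] (p q : A) : Prop := ∃ v : A, v * star v = p ∧ star v * v = q

/-- Murray–von Neumann subequivalence `p ⪯ q`: `p` is equivalent to a
subprojection of `q`. -/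
def MvNSubEquiv [CStarAlgebra A] (p q : A) : Prop :=
  ∃ p' : A, IsProjectionElem p' ∧ p' * q = p' ∧ q * p' = p' ∧ MvNEquiv p p'

/-- `a` is invertible up to the pair of projections `(p, q)`. -/
def InvertibleUpTo [CStarAlgebra A] (a p q : A) : Prop :=
  ∃ b : A, (1 - q) * a * (1 - p) * b = 1 - q ∧ b * ((1 - q) * a * (1 - p)) = 1 - p

/-- An ideal of finite type elements in a unital C*-algebra `A`
(Kečkić–Lazović): a selfadjoint (two-sided, complex-linear) ideal possessing an
approximate unit of projections, and such that for any two projections `p, q`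
in the ideal there is `v` with `v v* = q` and `v* v ⊥ p`. -/
structure FiniteTypeIdeal (A : Type*) [CStarAlgebra A] where
  carrier : Set A
  zero_mem : (0 : A) ∈ carrier
  add_mem : ∀ {a b : A}, a ∈ carrier → b ∈ carrier → a + b ∈ carrier
  smul_mem : ∀ (c : ℂ) {a : A}, a ∈ carrier → c • a ∈ carrier
  mul_mem_left : ∀ (a : A) {b : A}, b ∈ carrier → a * b ∈ carrier
  mul_mem_right : ∀ (a : A) {b : A}, b ∈ carrier → b * a ∈ carrier
  star_mem : ∀ {a : A}, a ∈ carrier → star a ∈ carrier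
  approx_unit : ∀ {a : A}, a ∈ carrier → ∀ ε : ℝ, 0 < ε →
    ∃ p ∈ carrier, IsProjectionElem p ∧ ‖a * p - a‖ < ε ∧ ‖p * a - a‖ < ε
  exchange : ∀ {p q : A}, p ∈ carrier → q ∈ carrier →
    IsProjectionElem p → IsProjectionElem q →
    ∃ v : A, v * star v = q ∧ IsProjectionElem (star v * v + p)

variable [CStarAlgebra A]

/-- Upper semi-Fredholm type elements `KΦ₊(A)`. -/
def UpperSemiFredholm (F : FiniteTypeIdeal A) (a : A) : Prop :=
  ∃ p q : A, IsProjectionElem p ∧ IsProjectionElem q ∧ p ∈ F.carrier ∧ InvertibleUpTo a p q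

/-- Lower semi-Fredholm type elements `KΦ₋(A)`. -/
def LowerSemiFredholm (F : FiniteTypeIdeal A) (a : A) : Prop :=
  ∃ p q : A, IsProjectionElem p ∧ IsProjectionElem q ∧ q ∈ F.carrier ∧ InvertibleUpTo a p q

/-- Fredholm type elements `KΦ(A)`. -/
def FredholmType (F : FiniteTypeIdeal A) (a : A) : Prop :=
  ∃ p q : A, IsProjectionElem p ∧ IsProjectionElem q ∧ p ∈ F.carrier ∧ q ∈ F.carrier ∧
    InvertibleUpTo a p q

/-- Upper semi-Weyl type elements `KΦ₊⁻(A)`. -/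
def UpperSemiWeyl (F : FiniteTypeIdeal A) (a : A) : Prop :=
  ∃ p q : A, IsProjectionElem p ∧ IsProjectionElem q ∧ p ∈ F.carrier ∧ MvNSubEquiv p q ∧
    InvertibleUpTo a p q

/-- Lower semi-Weyl type elements `KΦ₋⁺(A)`. -/
def LowerSemiWeyl (F : FiniteTypeIdeal A) (a : A) : Prop :=
  ∃ p q : A, IsProjectionElem p ∧ IsProjectionElem q ∧ q ∈ F.carrier ∧ MvNSubEquiv q p ∧
    InvertibleUpTo a p q

/-- Weyl type elements `KΦ₀(A)`. -/
def WeylType (F : FiniteTypeIdeal A) (a : A) : Prop :=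
  ∃ p q : A, IsProjectionElem p ∧ IsProjectionElem q ∧ p ∈ F.carrier ∧ q ∈ F.carrier ∧
    MvNEquiv p q ∧ InvertibleUpTo a p q

/-- The orthogonal complement of a subset of `A`, viewed as a Hilbert
`A`-module over itself with inner product `⟪x, y⟫ = x* y`. -/
def OrthoComplement (S : Set A) : Set A := {x : A | ∀ n ∈ S, star n * x = 0}

/-- A subset (submodule) of `A` is orthogonally complementable if every element
of `A` decomposes as a sum of an element of `S` and an element of `S^⊥`. -/
def IsOrthoComplementable (S : Set A) : Prop :=
  ∀ x : A, ∃ n ∈ S, ∃ m ∈ OrthoComplement S, x = n + m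

/-- A closed submodule `N` of `A` is (topologically) complementable if there is
a closed submodule `L` with `N ⊓ L = 0` and `N + L = A`. -/
def IsComplementable (N : Submodule Aᵐᵒᵖ A) : Prop :=
  ∃ L : Submodule Aᵐᵒᵖ A, IsClosed (L : Set A) ∧ N ⊓ L = ⊥ ∧ N ⊔ L = ⊤

/-- An orthogonal projection in `B(A)`: an idempotent which is self-adjoint
with respect to the `A`-valued inner product. -/
def IsOrthogonalProjectionOp (P : A →L[Aᵐᵒᵖ] A) : Prop :=
  P * P = P ∧ ∀ x y : A, star (P x) * y = star x * P y

/-- Invertibility of `F ∈ B(A)` up to a pair of projections `(P, Q)`. -/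
def OpInvertibleUpTo (F P Q : A →L[Aᵐᵒᵖ] A) : Prop :=
  ∃ D : A →L[Aᵐᵒᵖ] A,
    (1 - Q) * F * (1 - P) * D = 1 - Q ∧ D * ((1 - Q) * F * (1 - P)) = 1 - P


/-! Since `q` projects onto the orthogonal complement of `aA`, `q a = 0`. If `a` is invertible
up to `(p', q')` with inverse `b`, then `1 - a (1 - p') b` lies in `q' A`, so
`q = q (1 - a (1 - p') b)` belongs to the ideal.

Conversely, by the open mapping theorem a closed range gives `‖a x‖ ≤ C ‖a* a x‖`; testing this
on a suitable function of `a* a` shows that the spectrum of `a* a` has no points in `(0, C⁻²)`.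
With this gap, `b = f(a* a) a*`, where `f(s) = 1/s` away from `0`, satisfies `a b a = a` with
`a b` and `b a` self-adjoint. Then `q = 1 - a b`, and `a` is invertible up to `(1 - b a, q)`
with inverse `b`. -/

theorem ContinuousLinearMap.exists_preimage_norm_le_of_isClosed_range {𝕜 E F : Type*}
    [NontriviallyNormedField 𝕜] [NormedAddCommGroup E] [NormedSpace 𝕜 E] [CompleteSpace E]
    [NormedAddCommGroup F] [NormedSpace 𝕜 F] [CompleteSpace F]
    (f : E →L[𝕜] F) (hf : IsClosed (Set.range f)) :
    ∃ C > 0, ∀ x, ∃ y, f y = f x ∧ ‖y‖ ≤ C * ‖f x‖ := by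
  have : IsClosed (f.range : Set F) := by rwa [LinearMap.coe_range, ContinuousLinearMap.coe_coe]
  have : CompleteSpace f.range := this.completeSpace_coe
  obtain ⟨C, hC, hpre⟩ := f.rangeRestrict.exists_preimage_norm_le Set.rangeFactorization_surjective
  refine ⟨C, hC, fun x => ?_⟩
  obtain ⟨y, hy, hyC⟩ := hpre (f.rangeRestrict x)
  exact ⟨y, congrArg Subtype.val hy, hyC⟩

theorem exists_norm_mul_le_norm_star_mul_self_mul_of_isClosed {a : A}
    (hclosed : IsClosed {x : A | ∃ y : A, a * y = x}) :
    ∃ C > 0, ∀ x : A, ‖a * x‖ ≤ C * ‖star a * a * x‖ := by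
  obtain ⟨C, hC, hpre⟩ :=
    (ContinuousLinearMap.mul ℂ A a).exists_preimage_norm_le_of_isClosed_range hclosed
  refine ⟨C, hC, fun x => ?_⟩
  obtain ⟨y, hy, hyC⟩ := hpre x
  simp only [ContinuousLinearMap.mul_apply'] at hy hyC
  have key : ‖a * x‖ * ‖a * x‖ ≤ (C * ‖star a * a * x‖) * ‖a * x‖ :=
    calc ‖a * x‖ * ‖a * x‖ = ‖star (a * y) * (a * x)‖ := by rw [hy, CStarRing.norm_star_mul_self]
      _ = ‖star y * (star a * a * x)‖ := by rw [star_mul]; simp only [mul_assoc]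
      _ ≤ ‖y‖ * ‖star a * a * x‖ := by rw [← norm_star y]; exact norm_mul_le _ _
      _ ≤ (C * ‖a * x‖) * ‖star a * a * x‖ := by gcongr
      _ = (C * ‖star a * a * x‖) * ‖a * x‖ := by ring
  rcases (norm_nonneg (a * x)).eq_or_lt with h0 | hpos
  · rw [← h0]; positivity
  · exact le_of_mul_le_mul_right key hpos

theorem one_le_sq_mul_of_mem_spectrum_star_mul_self {a : A} {C : ℝ}
    (h : ∀ x : A, ‖a * x‖ ≤ C * ‖star a * a * x‖)
    {t : ℝ} (ht : t ∈ spectrum ℝ (star a * a)) (ht0 : t ≠ 0) : 1 ≤ C ^ 2 * t := by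
  have htpos : 0 < t := (spectrum_star_mul_self_nonneg t ht).lt_of_ne' ht0
  -- `g s = min 1 (t / s)` on `[0, ∞)`, so that `s * g s ≤ t` while `g t * t * g t = t`
  set g : ℝ → ℝ := fun s => t / max s t
  have hg : Continuous g :=
    continuous_const.div (by fun_prop) fun s => (htpos.trans_le (le_max_right s t)).ne'
  set x := cfc g (star a * a)
  have hlower : t ≤ ‖a * x‖ ^ 2 := by
    have hx : star (a * x) * (a * x) = cfc (fun s => g s * s * g s) (star a * a) := by
      rw [cfc_mul _ g _ (by fun_prop) hg.continuousOn, cfc_mul g (fun s => s) _ hg.continuousOn,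
        cfc_id' ℝ (star a * a), star_mul, (cfc_predicate g (star a * a)).star_eq, mul_assoc,
        mul_assoc, ← mul_assoc (star a)]
    have := norm_apply_le_norm_cfc (fun s => g s * s * g s) (star a * a) ht (by fun_prop)
    simp only [g, max_self, div_self htpos.ne', one_mul, mul_one, Real.norm_eq_abs,
      abs_of_pos htpos] at this
    rwa [sq, ← CStarRing.norm_star_mul_self, hx]
  have hupper : ‖star a * a * x‖ ≤ t := by
    rw [← cfc_id' ℝ (star a * a), ← cfc_mul (fun s => s) g _ (by fun_prop) hg.continuousOn]
    refine norm_cfc_le htpos.le fun s hs => ?_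
    have hs := spectrum_star_mul_self_nonneg s hs
    have hm : 0 < max s t := htpos.trans_le (le_max_right s t)
    have hs1 : s / max s t ≤ 1 := div_le_one_of_le₀ (le_max_left s t) hm.le
    have hsg : s * g s = s / max s t * t := by simp only [g]; ring
    rw [Real.norm_eq_abs, abs_le, hsg]
    constructor <;> nlinarith [div_nonneg hs hm.le]
  have hsq : t ≤ C ^ 2 * t ^ 2 :=
    calc t ≤ ‖a * x‖ ^ 2 := hlower
      _ ≤ (C * ‖star a * a * x‖) ^ 2 := pow_le_pow_left₀ (norm_nonneg _) (h x) 2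
      _ = C ^ 2 * ‖star a * a * x‖ ^ 2 := by ring
      _ ≤ C ^ 2 * t ^ 2 := by gcongr
  exact le_of_mul_le_mul_left (by nlinarith) htpos

theorem mul_cfc_star_mul_self_eq_self {a : A} {h : ℝ → ℝ}
    (hcont : ContinuousOn h (spectrum ℝ (star a * a)))
    (hone : ∀ s ∈ spectrum ℝ (star a * a), s ≠ 0 → h s = 1) :
    a * cfc h (star a * a) = a := by
  have hk : cfc h (star a * a) = cfc (fun s => h s - 1) (star a * a) + 1 := by
    rw [cfc_sub h (fun _ => 1) _ hcont, cfc_const_one ℝ (star a * a), sub_add_cancel]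
  set k := cfc (fun s => h s - 1) (star a * a) with hk_def
  have hksa : IsSelfAdjoint k := cfc_predicate _ _
  -- `(h - 1)² · id` vanishes on the spectrum, so `‖a k‖² = ‖k (a* a) k‖ = 0`
  have hvanish : star (a * k) * (a * k) = 0 := by
    have hkk :
        star (a * k) * (a * k) = cfc (fun s => (h s - 1) * s * (h s - 1)) (star a * a) := by
      rw [cfc_mul _ _ _ (by fun_prop) (by fun_prop), cfc_mul _ (fun s => s) _ (by fun_prop),
        cfc_id' ℝ (star a * a), ← hk_def, star_mul, hksa.star_eq]
      simp only [mul_assoc]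
    rw [hkk, ← cfc_zero ℝ (star a * a)]
    refine cfc_congr fun s hs => ?_
    rcases eq_or_ne s 0 with rfl | hs0
    · simp
    · simp [hone s hs hs0]
  rw [hk, mul_add, (CStarRing.star_mul_self_eq_zero_iff _).mp hvanish, mul_one, zero_add]

theorem exists_selfAdjoint_inner_inverse_of_spectrum_gap {a : A} {δ : ℝ} (hδ : 0 < δ)
    (hgap : ∀ t ∈ spectrum ℝ (star a * a), t ≠ 0 → δ ≤ t) :
    ∃ b : A, a * b * a = a ∧ IsSelfAdjoint (a * b) ∧ IsSelfAdjoint (b * a) := by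
  set f : ℝ → ℝ := fun s => (max s δ)⁻¹
  have hf : Continuous f :=
    (continuous_id.max continuous_const).inv₀ fun s => (hδ.trans_le (le_max_right s δ)).ne'
  have hba : cfc f (star a * a) * star a * a = cfc (fun s => f s * s) (star a * a) := by
    rw [cfc_mul f (fun s => s) _ hf.continuousOn, cfc_id' ℝ (star a * a), mul_assoc]
  refine ⟨cfc f (star a * a) * star a, ?_, ?_, ?_⟩
  · rw [mul_assoc, hba]
    refine mul_cfc_star_mul_self_eq_self (by fun_prop) fun s hs hs0 => ?_
    have hδs := hgap s hs hs0
    simp only [f, max_eq_left hδs]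
    exact inv_mul_cancel₀ (hδ.trans_le hδs).ne'
  · rw [← mul_assoc]
    exact (cfc_predicate f (star a * a)).conjugate a
  · rw [hba]
    exact cfc_predicate _ _

theorem exists_selfAdjoint_inner_inverse_of_isClosed_range {a : A}
    (hclosed : IsClosed {x : A | ∃ y : A, a * y = x}) :
    ∃ b : A, a * b * a = a ∧ IsSelfAdjoint (a * b) ∧ IsSelfAdjoint (b * a) := by
  obtain ⟨C, hC, hbound⟩ := exists_norm_mul_le_norm_star_mul_self_mul_of_isClosed hclosed
  refine exists_selfAdjoint_inner_inverse_of_spectrum_gap (δ := (C ^ 2)⁻¹) (by positivity)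
    fun t ht ht0 => ?_
  rw [inv_le_iff_one_le_mul₀ (by positivity), mul_comm]
  exact one_le_sq_mul_of_mem_spectrum_star_mul_self hbound ht ht0

theorem orthoComplement_range_mul_left (a : A) :
    OrthoComplement {x : A | ∃ y : A, a * y = x} = {x : A | star a * x = 0} := by
  ext x
  refine ⟨fun hx => hx a ⟨1, mul_one a⟩, ?_⟩
  rintro (hx : star a * x = 0) _ ⟨y, rfl⟩
  rw [star_mul, mul_assoc, hx, mul_zero]

theorem IsProjectionElem.eq_of_forall_mul_eq_self_iff {p q : A} (hp : IsProjectionElem p)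
    (hq : IsProjectionElem q) (h : ∀ x, p * x = x ↔ q * x = x) : p = q :=
  calc p = star (q * p) := by rw [(h p).1 hp.2, hp.1.star_eq]
    _ = p * q := by rw [star_mul, hp.1.star_eq, hq.1.star_eq]
    _ = q := (h q).2 hq.2

theorem IsProjectionElem.one_sub {p : A} (hp : IsProjectionElem p) : IsProjectionElem (1 - p) :=
  ⟨.sub (.one A) hp.1, by rw [sub_mul, mul_sub, mul_sub, hp.2]; simp⟩

theorem one_sub_mul_mul_eq_self_iff {a b : A} (haba : a * b * a = a) (hab : IsSelfAdjoint (a * b))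
    (x : A) : (1 - a * b) * x = x ↔ star a * x = 0 := by
  have hstar : star a * (a * b) = star a := by
    have := congrArg star haba
    rwa [star_mul, hab.star_eq] at this
  rw [sub_mul, one_mul, sub_eq_self]
  constructor
  · intro hx
    rw [← hstar, mul_assoc, hx, mul_zero]
  · intro hx
    rw [← hab.star_eq, star_mul, mul_assoc, hx, mul_zero]

theorem invertibleUpTo_one_sub_mul {a b : A} (haba : a * b * a = a) :
    InvertibleUpTo a (1 - b * a) (1 - a * b) := by
  have hcompress : (1 - (1 - a * b)) * a * (1 - (1 - b * a)) = a := by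
    rw [sub_sub_cancel, sub_sub_cancel, haba, ← mul_assoc, haba]
  refine ⟨b, ?_, ?_⟩
  · rw [hcompress, sub_sub_cancel]
  · rw [hcompress, sub_sub_cancel]

theorem FiniteTypeIdeal.mem_of_invertibleUpTo (F : FiniteTypeIdeal A) {a p q r : A}
    (hq : q ∈ F.carrier) (hinv : InvertibleUpTo a p q) (hra : r * a = 0) : r ∈ F.carrier := by
  obtain ⟨b, hb, -⟩ := hinv
  -- `1 - a (1 - p) b` lies in `q A`, and `r` annihilates `a (1 - p) b`
  have hdefect : 1 - a * (1 - p) * b = q * (1 - a * (1 - p) * b) := by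
    have : (1 - q) * (1 - a * (1 - p) * b) = 0 := by
      simp only [mul_assoc] at hb ⊢
      rw [mul_sub, mul_one, hb, sub_self]
    rwa [sub_mul, one_mul, sub_eq_zero] at this
  have hr : r = r * q * (1 - a * (1 - p) * b) := by
    rw [mul_assoc, ← hdefect, mul_sub, mul_one, ← mul_assoc, ← mul_assoc, hra, zero_mul, zero_mul,
      sub_zero]
  rw [hr]
  exact F.mul_mem_right _ (F.mul_mem_left r hq)

/-- Lemma `closed` (b): if `F ∈ B(A)` (realized as left multiplication by
`a ∈ A`) has closed image, then `F` is lower semi-Fredholm with respect to the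
ideal `F` of finite type elements iff the orthogonal projection onto
`(Im F)^⊥` belongs to the ideal. -/
theorem lowerSemiFredholm_iff_coker_projection_finite (F : FiniteTypeIdeal A) (a q : A)
    (hclosed : IsClosed {x : A | ∃ y : A, a * y = x})
    (hq : IsProjectionElem q)
    (hcoker : {x : A | q * x = x} = OrthoComplement {x : A | ∃ y : A, a * y = x}) :
    LowerSemiFredholm F a ↔ q ∈ F.carrier := by
  rw [orthoComplement_range_mul_left] at hcoker
  have hfix (x : A) : q * x = x ↔ star a * x = 0 := Set.ext_iff.mp hcoker x
  have hqa : q * a = 0 := by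
    simpa only [star_mul, star_star, hq.1.star_eq, star_zero] using congrArg star ((hfix q).1 hq.2)
  refine ⟨fun ⟨_, _, _, _, hq'F, hinv⟩ => F.mem_of_invertibleUpTo hq'F hinv hqa, fun hqF => ?_⟩
  obtain ⟨b, haba, hab, hba⟩ := exists_selfAdjoint_inner_inverse_of_isClosed_range hclosed
  have hab' : IsProjectionElem (a * b) := ⟨hab, by rw [← mul_assoc, haba]⟩
  have hba' : IsProjectionElem (b * a) := ⟨hba, by rw [mul_assoc, ← mul_assoc a, haba]⟩
  have hq_eq : q = 1 - a * b := hq.eq_of_forall_mul_eq_self_iff hab'.one_sub fun x =>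
    (hfix x).trans (one_sub_mul_mul_eq_self_iff haba hab x).symm
  subst hq_eq
  exact ⟨1 - b * a, 1 - a * b, hba'.one_sub, hq, hqF, invertibleUpTo_one_sub_mul haba⟩
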